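/- Let ω : 𝔻 → 𝔻 be analytic. Then for |z| = r with √2 − 1 ≤ r < 1 and r satisfying e^r(1+r²)² < 4(1−r²), we have |z ω'(z) / e^{ω(z)}| < 1. In particular this holds for all √2−1 ≤ r < r₁ where r₁ ≈ 0.537561 is the smallest positive root of e^r(1+r²)² − 4(1−r²) = 0. -/

import Mathlib

/-!
By Schwarz's lemma `|ω(z)| ≤ r`, hence `|e^{-ω(z)}| ≤ e^r`. Writing `ω(z) = z g(z)` with `|g| ≤ 1`,
the Schwarz–Pick inequality `|g'(z)| (1 - r²) ≤ 1 - |g(z)|²` (Schwarz's lemma conjugated by disk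
automorphisms) yields Dieudonné's bound `4 r (1 - r²) |ω'(z)| ≤ (1 + r²)²`. Multiplying,
`|z ω'(z) / e^{ω(z)}| ≤ e^r (1 + r²)² / (4 (1 - r²)) < 1`. Below the smallest positive root of
`e^r (1 + r²)² - 4 (1 - r²)`, which is `-3` at `0`, this function stays negative.
-/

open Metric Set Complex ComplexConjugate

noncomputable def mobius (a w : ℂ) : ℂ := (w + a) / (1 + conj a * w)

section Mobius

variable {a w : ℂ}

lemma sq_norm_one_add_conj_mul_sub_sq_norm_add (a w : ℂ) :
    ‖1 + conj a * w‖ ^ 2 - ‖w + a‖ ^ 2 = (1 - ‖a‖ ^ 2) * (1 - ‖w‖ ^ 2) := by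
  simp only [← normSq_eq_norm_sq, normSq_apply, add_re, add_im, mul_re, mul_im, conj_re,
    conj_im, one_re, one_im]
  ring

lemma one_add_conj_mul_ne_zero (ha : ‖a‖ < 1) (hw : ‖w‖ ≤ 1) : 1 + conj a * w ≠ 0 := by
  have hlt : ‖conj a * w‖ < 1 := by
    rw [norm_mul, RCLike.norm_conj]
    nlinarith [norm_nonneg a, norm_nonneg w]
  intro h
  rw [eq_neg_of_add_eq_zero_right h, norm_neg, norm_one] at hlt
  exact hlt.false

lemma norm_mobius_lt_one (ha : ‖a‖ < 1) (hw : ‖w‖ < 1) : ‖mobius a w‖ < 1 := by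
  have hden := one_add_conj_mul_ne_zero ha hw.le
  rw [mobius, norm_div, div_lt_one (norm_pos_iff.mpr hden)]
  have hid := sq_norm_one_add_conj_mul_sub_sq_norm_add a w
  refine lt_of_pow_lt_pow_left₀ 2 (norm_nonneg _) ?_
  nlinarith [mul_pos (by nlinarith [norm_nonneg a] : 0 < 1 - ‖a‖ ^ 2)
    (by nlinarith [norm_nonneg w] : 0 < 1 - ‖w‖ ^ 2)]

lemma mapsTo_mobius_ball (ha : ‖a‖ < 1) : MapsTo (mobius a) (ball 0 1) (ball 0 1) := fun _ hw ↦
  mem_ball_zero_iff.mpr (norm_mobius_lt_one ha (mem_ball_zero_iff.mp hw))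

lemma mobius_apply_zero (a : ℂ) : mobius a 0 = a := by simp [mobius]

lemma mobius_neg_apply_self (a : ℂ) : mobius (-a) a = 0 := by simp [mobius]

lemma hasDerivAt_mobius (h : 1 + conj a * w ≠ 0) :
    HasDerivAt (mobius a) ((1 - (‖a‖ : ℂ) ^ 2) / (1 + conj a * w) ^ 2) w := by
  have hnum : HasDerivAt (fun w ↦ w + a) 1 w := (hasDerivAt_id w).add_const a
  have hden : HasDerivAt (fun w ↦ 1 + conj a * w) (conj a) w := by
    simpa using ((hasDerivAt_id w).const_mul (conj a)).const_add 1
  exact (hnum.div hden h).congr_deriv (by rw [← mul_conj']; ring)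

lemma differentiableOn_mobius (ha : ‖a‖ < 1) : DifferentiableOn ℂ (mobius a) (ball 0 1) :=
  fun _ hw ↦ (hasDerivAt_mobius (one_add_conj_mul_ne_zero ha
    (mem_ball_zero_iff.mp hw).le)).differentiableAt.differentiableWithinAt

lemma hasDerivAt_mobius_zero (a : ℂ) : HasDerivAt (mobius a) (1 - (‖a‖ : ℂ) ^ 2) 0 := by
  simpa using hasDerivAt_mobius (a := a) (w := 0) (by simp)

lemma hasDerivAt_mobius_neg_self (ha : ‖a‖ < 1) :
    HasDerivAt (mobius (-a)) (1 - (‖a‖ : ℂ) ^ 2)⁻¹ a := by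
  have hden : 1 + conj (-a) * a = 1 - (‖a‖ : ℂ) ^ 2 := by
    rw [map_neg, neg_mul, conj_mul']; ring
  have hne : 1 - (‖a‖ : ℂ) ^ 2 ≠ 0 := hden ▸ one_add_conj_mul_ne_zero (by simpa) ha.le
  convert hasDerivAt_mobius (hden ▸ hne) using 1
  rw [hden, norm_neg]
  field_simp

end Mobius

lemma norm_one_sub_sq_norm {a : ℂ} (ha : ‖a‖ ≤ 1) : ‖1 - (‖a‖ : ℂ) ^ 2‖ = 1 - ‖a‖ ^ 2 := by
  rw [← ofReal_pow, ← ofReal_one, ← ofReal_sub, norm_real, Real.norm_of_nonneg]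
  nlinarith [norm_nonneg a]

lemma norm_deriv_mul_one_sub_sq_le {f : ℂ → ℂ} (hd : DifferentiableOn ℂ f (ball 0 1))
    (hf : MapsTo f (ball 0 1) (ball 0 1)) {z : ℂ} (hz : ‖z‖ < 1) :
    ‖deriv f z‖ * (1 - ‖z‖ ^ 2) ≤ 1 - ‖f z‖ ^ 2 := by
  have hz' : z ∈ ball (0 : ℂ) 1 := mem_ball_zero_iff.mpr hz
  have hb : ‖f z‖ < 1 := mem_ball_zero_iff.mp (hf hz')
  have hb' : ‖-f z‖ < 1 := by rwa [norm_neg]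
  -- Conjugating by disk automorphisms moves `z ↦ f z` to `0 ↦ 0`, where Schwarz's lemma applies.
  set h := mobius (-f z) ∘ f ∘ mobius z
  have hh : HasDerivAt h ((1 - (‖f z‖ : ℂ) ^ 2)⁻¹ * (deriv f z * (1 - (‖z‖ : ℂ) ^ 2))) 0 := by
    have hfd : HasDerivAt f (deriv f z) (mobius z 0) := by
      rw [mobius_apply_zero]
      exact (hd.differentiableAt (isOpen_ball.mem_nhds hz')).hasDerivAt
    have hm : HasDerivAt (mobius (-f z)) (1 - (‖f z‖ : ℂ) ^ 2)⁻¹ ((f ∘ mobius z) 0) := by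
      simpa [mobius_apply_zero] using hasDerivAt_mobius_neg_self hb
    exact hm.comp 0 (hfd.comp 0 (hasDerivAt_mobius_zero z))
  have hmaps : MapsTo h (ball 0 1) (ball 0 1) :=
    (mapsTo_mobius_ball hb').comp (hf.comp (mapsTo_mobius_ball hz))
  have h0 : h 0 = 0 := by simp [h, mobius_apply_zero, mobius_neg_apply_self]
  have hschwarz : ‖deriv h 0‖ ≤ 1 :=
    norm_deriv_le_one_of_mapsTo_ball
      ((differentiableOn_mobius hb').comp (hd.comp (differentiableOn_mobius hz)
        (mapsTo_mobius_ball hz)) (hf.comp (mapsTo_mobius_ball hz)))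
      (by rw [h0]; exact hmaps.mono_right ball_subset_closedBall) one_pos
  rwa [hh.deriv, norm_mul, norm_mul, norm_inv, norm_one_sub_sq_norm hb.le,
    norm_one_sub_sq_norm hz.le, inv_mul_le_iff₀ (by nlinarith [norm_nonneg (f z)]), mul_one]
    at hschwarz

lemma norm_deriv_mul_one_sub_sq_le_of_norm_le_one {f : ℂ → ℂ}
    (hd : DifferentiableOn ℂ f (ball 0 1)) (hf : MapsTo f (ball 0 1) (closedBall 0 1)) {z : ℂ}
    (hz : ‖z‖ < 1) : ‖deriv f z‖ * (1 - ‖z‖ ^ 2) ≤ 1 - ‖f z‖ ^ 2 := by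
  by_cases hopen : MapsTo f (ball 0 1) (ball 0 1)
  · exact norm_deriv_mul_one_sub_sq_le hd hopen hz
  -- Otherwise `‖f‖` attains its maximum `1` inside the disk, so `f` is constant.
  obtain ⟨w, hw, hfw⟩ := not_forall₂.mp hopen
  have hfw1 : ‖f w‖ = 1 := le_antisymm (mem_closedBall_zero_iff.mp (hf hw))
    (by simpa using hfw)
  have hmax : IsMaxOn (norm ∘ f) (ball 0 1) w := fun v hv ↦ by
    simpa [hfw1] using mem_closedBall_zero_iff.mp (hf hv)
  have hconst := Complex.eqOn_of_isPreconnected_of_isMaxOn_norm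
    (convex_ball (0 : ℂ) 1).isPreconnected isOpen_ball hd hw hmax
  have hz' : z ∈ ball (0 : ℂ) 1 := mem_ball_zero_iff.mpr hz
  have hderiv : deriv f z = 0 := by
    rw [(Filter.eventuallyEq_of_mem (isOpen_ball.mem_nhds hz') hconst).deriv_eq]
    exact deriv_const z (f w)
  simp [hderiv, hconst hz', hfw1]

lemma four_mul_one_sub_sq_mul_norm_mul_deriv_le {ω : ℂ → ℂ}
    (hd : DifferentiableOn ℂ ω (ball 0 1)) (hω : MapsTo ω (ball 0 1) (closedBall 0 1))
    (h0 : ω 0 = 0) {z : ℂ} (hz : ‖z‖ < 1) :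
    4 * (1 - ‖z‖ ^ 2) * ‖z * deriv ω z‖ ≤ (1 + ‖z‖ ^ 2) ^ 2 := by
  have hz' : z ∈ ball (0 : ℂ) 1 := mem_ball_zero_iff.mpr hz
  set g := dslope ω 0
  have hgd : DifferentiableOn ℂ g (ball 0 1) :=
    (Complex.differentiableOn_dslope (ball_mem_nhds 0 one_pos)).mpr hd
  have hg : MapsTo g (ball 0 1) (closedBall 0 1) := fun w hw ↦ by
    simpa using norm_dslope_le_div_of_mapsTo_ball hd (by rwa [h0]) hw
  have hωg : ω = fun w ↦ w * g w := funext fun w ↦ by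
    simpa [h0] using (sub_smul_dslope ω 0 w).symm
  have hderiv : deriv ω z = g z + z * deriv g z := by
    have : HasDerivAt (fun w ↦ w * g w) (1 * g z + z * deriv g z) z :=
      (hasDerivAt_id z).mul (hgd.differentiableAt (isOpen_ball.mem_nhds hz')).hasDerivAt
    rw [hωg, this.deriv, one_mul]
  have hnorm : ‖z * deriv ω z‖ ≤ ‖z‖ * ‖g z‖ + ‖z‖ ^ 2 * ‖deriv g z‖ := by
    rw [hderiv, mul_add, ← mul_assoc, ← sq]
    exact (norm_add_le _ _).trans_eq (by rw [norm_mul, norm_mul, norm_pow])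
  have hpick := norm_deriv_mul_one_sub_sq_le_of_norm_le_one hgd hg hz
  -- Maximising the resulting bound over `‖g z‖` leaves the square `(1 - r² - 2 r ‖g z‖)²`.
  nlinarith [sq_nonneg (1 - ‖z‖ ^ 2 - 2 * ‖z‖ * ‖g z‖),
    mul_le_mul_of_nonneg_left hnorm (by nlinarith [norm_nonneg z] : 0 ≤ 4 * (1 - ‖z‖ ^ 2)),
    mul_le_mul_of_nonneg_left hpick (by positivity : 0 ≤ 4 * ‖z‖ ^ 2)]

lemma norm_mul_deriv_div_exp_lt_one {ω : ℂ → ℂ} (hd : DifferentiableOn ℂ ω (ball 0 1))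
    (hω : MapsTo ω (ball 0 1) (closedBall 0 1)) (h0 : ω 0 = 0) {z : ℂ}
    (hr : Real.exp ‖z‖ * (1 + ‖z‖ ^ 2) ^ 2 < 4 * (1 - ‖z‖ ^ 2)) :
    ‖z * deriv ω z / exp (ω z)‖ < 1 := by
  have hpos : 0 < 1 - ‖z‖ ^ 2 := by nlinarith [Real.exp_pos ‖z‖]
  have hz : ‖z‖ < 1 := by nlinarith [norm_nonneg z]
  have hexp : ‖(exp (ω z))⁻¹‖ ≤ Real.exp ‖z‖ := by
    rw [← Complex.exp_neg]
    refine (norm_exp_le_exp_norm _).trans (Real.exp_le_exp.mpr ?_)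
    rw [norm_neg]
    exact norm_le_norm_of_mapsTo_ball hd hω h0 hz
  have hdieudonne := mul_le_mul_of_nonneg_right
    (four_mul_one_sub_sq_mul_norm_mul_deriv_le hd hω h0 hz) (Real.exp_pos ‖z‖).le
  rw [div_eq_mul_inv, norm_mul]
  calc ‖z * deriv ω z‖ * ‖(exp (ω z))⁻¹‖ ≤ ‖z * deriv ω z‖ * Real.exp ‖z‖ :=
        mul_le_mul_of_nonneg_left hexp (norm_nonneg _)
    _ < 1 := by nlinarith

lemma neg_of_forall_ne_zero_of_neg {f : ℝ → ℝ} {a b : ℝ} (hab : a ≤ b)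
    (hf : ContinuousOn f (Icc a b)) (ha : f a < 0) (hne : ∀ x ∈ Ioc a b, f x ≠ 0) : f b < 0 := by
  by_contra! hb
  obtain ⟨c, hc, hfc⟩ := intermediate_value_Ioc hab hf ⟨ha, hb⟩
  exact hne c hc hfc

lemma exp_mul_sq_lt_of_lt_smallest_root {r₁ r : ℝ}
    (hmin : ∀ x : ℝ, 0 < x → Real.exp x * (1 + x ^ 2) ^ 2 = 4 * (1 - x ^ 2) → r₁ ≤ x)
    (hr0 : 0 ≤ r) (hr : r < r₁) : Real.exp r * (1 + r ^ 2) ^ 2 < 4 * (1 - r ^ 2) := by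
  suffices Real.exp r * (1 + r ^ 2) ^ 2 - 4 * (1 - r ^ 2) < 0 by linarith
  refine neg_of_forall_ne_zero_of_neg (f := fun x ↦ Real.exp x * (1 + x ^ 2) ^ 2 - 4 * (1 - x ^ 2))
    hr0 (by fun_prop) (by norm_num) fun x hx hfx ↦ ?_
  exact (hmin x hx.1 (sub_eq_zero.mp hfx)).not_gt (hx.2.trans_lt hr)

/-- For a holomorphic self-map ω of the disk with ω(0) = 0, the quantity
|zω'(z)/e^{ω(z)}| is less than 1 on circles |z| = r with √2 − 1 ≤ r satisfying
e^r(1+r²)² < 4(1−r²); in particular for √2 − 1 ≤ r < r₁ where r₁ is the smallest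
positive root of e^r(1+r²)² = 4(1−r²). -/
theorem exp_subord_radius (ω : ℂ → ℂ)
    (hd : DifferentiableOn ℂ ω (ball (0:ℂ) 1))
    (hmap : ∀ z ∈ ball (0:ℂ) 1, ω z ∈ ball (0:ℂ) 1)
    (h0 : ω 0 = 0) :
    (∀ z : ℂ, ‖z‖ < 1 → Real.sqrt 2 - 1 ≤ ‖z‖ →
        Real.exp ‖z‖ * (1 + ‖z‖ ^ 2) ^ 2 < 4 * (1 - ‖z‖ ^ 2) →
        ‖z * deriv ω z / Complex.exp (ω z)‖ < 1) ∧
    ∀ r₁ : ℝ, 0 < r₁ →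
      Real.exp r₁ * (1 + r₁ ^ 2) ^ 2 = 4 * (1 - r₁ ^ 2) →
      (∀ r : ℝ, 0 < r → Real.exp r * (1 + r ^ 2) ^ 2 = 4 * (1 - r ^ 2) → r₁ ≤ r) →
      ∀ z : ℂ, Real.sqrt 2 - 1 ≤ ‖z‖ → ‖z‖ < r₁ →
        ‖z * deriv ω z / Complex.exp (ω z)‖ < 1 := by
  have hω : MapsTo ω (ball 0 1) (closedBall 0 1) := fun z hz ↦ ball_subset_closedBall (hmap z hz)
  refine ⟨fun z _ _ hr ↦ norm_mul_deriv_div_exp_lt_one hd hω h0 hr, ?_⟩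
  intro r₁ _ _ hmin z _ hz
  exact norm_mul_deriv_div_exp_lt_one hd hω h0
    (exp_mul_sq_lt_of_lt_smallest_root hmin (norm_nonneg z) hz)
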